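/- arXiv:0807.3477 — 3 statements merged into one kernel-verified Lean document; each statement's English description precedes it below -/
import Mathlib

section
/- Infinitesimal Taylor formula: if f : ℝ → ℝ is (n+1)-times continuously differentiable, then for every real x and every infinitesimal ε there exists an infinitesimal η such that f*(x+ε) = Σ_{k=0}^{n} f^{(k)}(x)·ε^k / k! + η·ε^n. -/
/-!
Taylor's theorem with Peano remainder says that
`R t = f (x + t) - ∑ k ≤ n, f⁽ᵏ⁾(x) tᵏ / k!` is `o(tⁿ)` as `t → 0`, so `g t = R t / tⁿ` tends to `0`
at `0`; and `R t = g t * tⁿ` for every real `t`, including `t = 0`, where `R` vanishes.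
Transferring this identity to the hyperreals, `η = g* ε` works, since a function tending to `0`
at `0` maps infinitesimals to infinitesimals.
-/

open Hyperreal Filter Topology Asymptotics

set_option linter.deprecated false

noncomputable def hyperExt (f : ℝ → ℝ) : ℝ* → ℝ* := fun x => Germ.map f x

theorem taylorWithinEval_univ_add (f : ℝ → ℝ) (n : ℕ) (x t : ℝ) :
    taylorWithinEval f n Set.univ x (x + t) =
      ∑ k ∈ Finset.range (n + 1), iteratedDeriv k f x / k.factorial * t ^ k := by
  simp only [taylor_within_apply, iteratedDerivWithin_univ, add_sub_cancel_left, smul_eq_mul]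
  exact Finset.sum_congr rfl fun k _ => by ring

theorem taylor_isLittleO_pow {f : ℝ → ℝ} {n : ℕ} (hf : ContDiff ℝ n f) (x : ℝ) :
    (fun t => f (x + t) - ∑ k ∈ Finset.range (n + 1), iteratedDeriv k f x / k.factorial * t ^ k)
      =o[𝓝 0] fun t => t ^ n := by
  have hx : Tendsto (x + ·) (𝓝 0) (𝓝 x) := by
    simpa using (continuous_const_add x).tendsto 0
  simpa [Function.comp_def, taylorWithinEval_univ_add] using
    (taylor_isLittleO_univ (x₀ := x) hf).comp_tendsto hx

theorem Asymptotics.IsLittleO.div_pow_mul_pow {𝕜 : Type*} [NormedField 𝕜] {R : 𝕜 → 𝕜} {n : ℕ}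
    (h : R =o[𝓝 0] fun t => t ^ n) (t : 𝕜) : R t / t ^ n * t ^ n = R t := by
  refine div_mul_cancel_of_imp fun ht => ?_
  rw [(pow_eq_zero_iff'.1 ht).1]
  exact isLittleO_pure.1 (h.mono (pure_le_nhds 0))

namespace Hyperreal

theorem infinitesimal_iff_tendsto {x : ℝ*} : Infinitesimal x ↔ x.Tendsto (𝓝 0) :=
  isSt_iff_tendsto

theorem Infinitesimal.hyperExt {x : ℝ*} (hx : Infinitesimal x) {g : ℝ → ℝ}
    (hg : Tendsto g (𝓝 0) (𝓝 0)) : Infinitesimal (hyperExt g x) := by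
  obtain ⟨u, rfl⟩ := ofSeq_surjective x
  exact infinitesimal_iff_tendsto.2 (hg.comp (infinitesimal_iff_tendsto.1 hx))

theorem hyperExt_coe_add (f : ℝ → ℝ) (x : ℝ) (y : ℝ*) :
    hyperExt f (x + y) = hyperExt (fun t => f (x + t)) y := by
  obtain ⟨u, rfl⟩ := ofSeq_surjective y
  rfl

theorem hyperExt_add_mul_pow (P g : ℝ → ℝ) (n : ℕ) (y : ℝ*) :
    hyperExt (fun t => P t + g t * t ^ n) y = hyperExt P y + hyperExt g y * y ^ n := by
  obtain ⟨u, rfl⟩ := ofSeq_surjective y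
  rfl

theorem hyperExt_sum_mul_pow (c : ℕ → ℝ) (s : Finset ℕ) (y : ℝ*) :
    hyperExt (fun t => ∑ k ∈ s, c k * t ^ k) y = ∑ k ∈ s, (c k : ℝ*) * y ^ k := by
  obtain ⟨u, rfl⟩ := ofSeq_surjective y
  have hcomp : (fun t => ∑ k ∈ s, c k * t ^ k) ∘ u = ∑ k ∈ s, (fun _ => c k) * u ^ k := by
    funext i
    simp
  simp only [hyperExt, ofSeq, Germ.map_coe, hcomp]
  rw [← Germ.coe_coeRingHom, map_sum]
  simp only [map_mul, map_pow]
  rfl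

end Hyperreal

/-- infinitesimal Taylor formula with infinitesimal remainder. -/
theorem taylor_infinitesimal (n : ℕ) (f : ℝ → ℝ) (hf : ContDiff ℝ (n + 1) f)
    (x : ℝ) (eps : ℝ*) (heps : Infinitesimal eps) :
    ∃ η : ℝ*, Infinitesimal η ∧
      hyperExt f (x + eps) =
        (∑ k ∈ Finset.range (n + 1),
          ((iteratedDeriv k f x / k.factorial : ℝ) : ℝ*) * eps ^ k) + η * eps ^ n := by
  set c : ℕ → ℝ := fun k => iteratedDeriv k f x / k.factorial
  have hR := taylor_isLittleO_pow (hf.of_le (by exact_mod_cast n.le_succ)) x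
  set P : ℝ → ℝ := fun t => ∑ k ∈ Finset.range (n + 1), c k * t ^ k
  set g : ℝ → ℝ := fun t => (f (x + t) - P t) / t ^ n
  refine ⟨hyperExt g eps, heps.hyperExt hR.tendsto_div_nhds_zero, ?_⟩
  have hsplit : (fun t => f (x + t)) = fun t => P t + g t * t ^ n := by
    funext t
    rw [hR.div_pow_mul_pow t]
    ring
  rw [hyperExt_coe_add, hsplit, hyperExt_add_mul_pow, hyperExt_sum_mul_pow]
end

section
/- Nonstandard Ito formula: let φ : ℝ² → ℝ be C³ with compact support, ε = 1/α an infinitesimal, and x a function on the grid such that |Δx/Δt(t)| ≤ η·α^{2/3} for some infinitesimal η. Then Δ/Δt [φ(t, x(t))] ~ φ_t(t,x(t)) + φ_x(t,x(t))·(Δx/Δt)(t) + (ε/2)·φ_xx(t,x(t))·((Δx/Δt)(t))², where ~ denotes equality up to an infinitesimal. -/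
open Hyperreal Filter

/-- The canonical extension of a real function of two variables to the
hyperreals. -/
noncomputable def hyperExt2 (f : ℝ → ℝ → ℝ) : ℝ* → ℝ* → ℝ* :=
  fun x y => Germ.map₂ f x y

/-!
Write `k = x(t + ε) - x(t)`. Multiplied by `ε`, the error term is the remainder of the expansion
`φ(t + ε, x + k) ≈ φ(t, x) + φ_t ε + φ_x k + φ_xx k² / 2`. Splitting the increment into a step in
`t` at height `x + k` and a step in `x` at time `t`, and using that the second and third partial
derivatives of `φ` are uniformly bounded (`φ` is `C³` with compact support), this remainder is
`O(ε² + |k| ε + |k|³)` uniformly. The growth hypothesis gives `|k| ≤ η ε^{1/3}`, so `|k| ≤ η` and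
`|k|³ / ε ≤ η³`, and the error term is `O(ε + η + η³)`, an infinitesimal. The uniform real
estimate passes to the hyperreals index by index along the ultrafilter.
-/

set_option linter.deprecated false

open Set

section TaylorOneVariable

variable {f f' f'' f''' : ℝ → ℝ} {M : ℝ}

theorem abs_sub_le_of_hasDerivAt_of_abs_le_uIcc (hf : ∀ t, HasDerivAt f (f' t) t) {x y : ℝ}
    (hb : ∀ t ∈ uIcc x y, |f' t| ≤ M) : |f y - f x| ≤ M * |y - x| := by
  simpa only [Real.norm_eq_abs] using Convex.norm_image_sub_le_of_norm_hasDerivWithin_le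
    (fun t _ => (hf t).hasDerivWithinAt) hb (convex_uIcc x y) left_mem_uIcc right_mem_uIcc

theorem abs_taylor_one_remainder_le (hf : ∀ t, HasDerivAt f (f' t) t)
    (hf' : ∀ t, HasDerivAt f' (f'' t) t) (hb : ∀ t, |f'' t| ≤ M) (x y : ℝ) :
    |f y - f x - f' x * (y - x)| ≤ M * |y - x| ^ 2 := by
  have hM : 0 ≤ M := (abs_nonneg _).trans (hb x)
  have hg (t : ℝ) : HasDerivAt (fun t => f t - f' x * (t - x)) (f' t - f' x) t := by
    simpa using (hf t).fun_sub (((hasDerivAt_id' t).sub_const x).const_mul (f' x))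
  have hg' : ∀ t ∈ uIcc x y, |f' t - f' x| ≤ M * |y - x| := fun t ht => calc
    |f' t - f' x| ≤ M * |t - x| := abs_sub_le_of_hasDerivAt_of_abs_le_uIcc hf' fun s _ => hb s
    _ ≤ M * |y - x| := mul_le_mul_of_nonneg_left (abs_sub_left_of_mem_uIcc ht) hM
  convert abs_sub_le_of_hasDerivAt_of_abs_le_uIcc hg hg' using 1
  · simp only [sub_self, mul_zero, sub_zero]; ring_nf
  · ring

theorem abs_taylor_two_remainder_le (hf : ∀ t, HasDerivAt f (f' t) t)
    (hf' : ∀ t, HasDerivAt f' (f'' t) t) (hf'' : ∀ t, HasDerivAt f'' (f''' t) t)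
    (hb : ∀ t, |f''' t| ≤ M) (x y : ℝ) :
    |f y - f x - f' x * (y - x) - f'' x / 2 * (y - x) ^ 2| ≤ M * |y - x| ^ 3 := by
  have hM : 0 ≤ M := (abs_nonneg _).trans (hb x)
  have hg (t : ℝ) : HasDerivAt (fun t => f t - f' x * (t - x) - f'' x / 2 * (t - x) ^ 2)
      (f' t - f' x - f'' x * (t - x)) t := by
    have hsq : HasDerivAt (fun t => (t - x) ^ 2) (2 * (t - x)) t := by
      simpa using ((hasDerivAt_id' t).sub_const x).fun_pow 2
    exact (((hf t).fun_sub (((hasDerivAt_id' t).sub_const x).const_mul (f' x))).fun_sub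
      (hsq.const_mul (f'' x / 2))).congr_deriv (by ring)
  have hg' : ∀ t ∈ uIcc x y, |f' t - f' x - f'' x * (t - x)| ≤ M * |y - x| ^ 2 :=
    fun t ht => calc
      |f' t - f' x - f'' x * (t - x)| ≤ M * |t - x| ^ 2 :=
        abs_taylor_one_remainder_le hf' hf'' hb x t
      _ ≤ M * |y - x| ^ 2 := by
        have := abs_sub_left_of_mem_uIcc ht
        gcongr
  convert abs_sub_le_of_hasDerivAt_of_abs_le_uIcc hg hg' using 1
  · simp only [sub_self, mul_zero, sub_zero]; ring_nf
  · ring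

end TaylorOneVariable

section PartialDerivatives

noncomputable def partialDeriv (v : ℝ × ℝ) (g : ℝ × ℝ → ℝ) (p : ℝ × ℝ) : ℝ := fderiv ℝ g p v

local notation "∂₁" => partialDeriv (1, 0)
local notation "∂₂" => partialDeriv (0, 1)

variable {g φ : ℝ × ℝ → ℝ}

theorem ContDiff.partialDeriv {m n : WithTop ℕ∞} (hg : ContDiff ℝ n g) (hmn : m + 1 ≤ n)
    (v : ℝ × ℝ) : ContDiff ℝ m (partialDeriv v g) :=
  (hg.fderiv_right hmn).clm_apply contDiff_const

theorem HasCompactSupport.partialDeriv (hg : HasCompactSupport g) (v : ℝ × ℝ) :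
    HasCompactSupport (partialDeriv v g) :=
  hg.fderiv_apply ℝ v

theorem hasDerivAt_fst_slice (hg : Differentiable ℝ g) (s u : ℝ) :
    HasDerivAt (fun a => g (a, u)) (∂₁ g (s, u)) s :=
  (hg (s, u)).hasFDerivAt.comp_hasDerivAt s ((hasDerivAt_id' s).prodMk (hasDerivAt_const s u))

theorem hasDerivAt_snd_slice (hg : Differentiable ℝ g) (s u : ℝ) :
    HasDerivAt (fun b => g (s, b)) (∂₂ g (s, u)) u :=
  (hg (s, u)).hasFDerivAt.comp_hasDerivAt u ((hasDerivAt_const u s).prodMk (hasDerivAt_id' u))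

theorem abs_increment_sub_taylor_le (hφ : ContDiff ℝ 3 φ) {M : ℝ}
    (hM : ∀ p, |∂₁ (∂₁ φ) p| ≤ M ∧ |∂₂ (∂₁ φ) p| ≤ M ∧ |∂₂ (∂₂ (∂₂ φ)) p| ≤ M)
    (s u v h : ℝ) :
    |φ (s + h, v) - φ (s, u) - ∂₁ φ (s, u) * h - ∂₂ φ (s, u) * (v - u)
        - ∂₂ (∂₂ φ) (s, u) / 2 * (v - u) ^ 2| ≤ M * (|h| ^ 2 + |v - u| * |h| + |v - u| ^ 3) := by
  have hφ' : Differentiable ℝ φ := hφ.differentiable (by norm_num)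
  have hφ₁ : Differentiable ℝ (∂₁ φ) :=
    (hφ.partialDeriv (m := 2) (by norm_num) _).differentiable (by norm_num)
  have hφ₂ : ContDiff ℝ 2 (∂₂ φ) := hφ.partialDeriv (by norm_num) _
  have hφ₂₂ : Differentiable ℝ (∂₂ (∂₂ φ)) :=
    (hφ₂.partialDeriv (m := 1) (by norm_num) _).differentiable (by norm_num)
  have hA₁ := abs_taylor_one_remainder_le (hasDerivAt_fst_slice hφ' · v)
    (hasDerivAt_fst_slice hφ₁ · v) (fun a => (hM (a, v)).1) s (s + h)
  have hA₂ := abs_sub_le_of_hasDerivAt_of_abs_le_uIcc (hasDerivAt_snd_slice hφ₁ s)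
    (fun b _ => (hM (s, b)).2.1) (x := u) (y := v)
  have hA₃ := abs_taylor_two_remainder_le (hasDerivAt_snd_slice hφ' s)
    (hasDerivAt_snd_slice (hφ₂.differentiable (by norm_num)) s) (hasDerivAt_snd_slice hφ₂₂ s)
    (fun b => (hM (s, b)).2.2) u v
  rw [add_sub_cancel_left] at hA₁
  calc _ = |(φ (s + h, v) - φ (s, v) - ∂₁ φ (s, v) * h) + (∂₁ φ (s, v) - ∂₁ φ (s, u)) * h
        + (φ (s, v) - φ (s, u) - ∂₂ φ (s, u) * (v - u) - ∂₂ (∂₂ φ) (s, u) / 2 * (v - u) ^ 2)| := by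
        ring_nf
    _ ≤ M * |h| ^ 2 + M * |v - u| * |h| + M * |v - u| ^ 3 := by
      refine (abs_add_three _ _ _).trans ?_
      rw [abs_mul]
      gcongr
    _ = M * (|h| ^ 2 + |v - u| * |h| + |v - u| ^ 3) := by ring

noncomputable def itoRemainder (φ : ℝ × ℝ → ℝ) (s u v h : ℝ) : ℝ :=
  (φ (s + h, v) - φ (s, u)) / h -
    (deriv (fun a => φ (a, u)) s + deriv (fun b => φ (s, b)) u * ((v - u) / h) +
      h / 2 * deriv (fun b => deriv (fun c => φ (s, c)) b) u * ((v - u) / h) ^ 2)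

theorem itoRemainder_eq_div (hφ : ContDiff ℝ 2 φ) (s u v : ℝ) {h : ℝ} (hh : h ≠ 0) :
    itoRemainder φ s u v h = (φ (s + h, v) - φ (s, u) - ∂₁ φ (s, u) * h
      - ∂₂ φ (s, u) * (v - u) - ∂₂ (∂₂ φ) (s, u) / 2 * (v - u) ^ 2) / h := by
  have hφ' : Differentiable ℝ φ := hφ.differentiable (by norm_num)
  have hφ₂ : Differentiable ℝ (∂₂ φ) :=
    (hφ.partialDeriv (m := 1) (by norm_num) _).differentiable (by norm_num)
  have hderiv₂ (s : ℝ) : deriv (fun b => φ (s, b)) = fun b => ∂₂ φ (s, b) :=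
    funext fun b => (hasDerivAt_snd_slice hφ' s b).deriv
  rw [itoRemainder, (hasDerivAt_fst_slice hφ' s u).deriv, hderiv₂,
    (hasDerivAt_snd_slice hφ₂ s u).deriv]
  field_simp
  ring

theorem exists_abs_itoRemainder_le (hφ : ContDiff ℝ 3 φ) (hsupp : HasCompactSupport φ) :
    ∃ C, 0 ≤ C ∧ ∀ s u v h : ℝ, 0 < h →
      |itoRemainder φ s u v h| ≤ C * (h + |v - u| + |v - u| ^ 3 / h) := by
  have hφ₁ : ContDiff ℝ 2 (∂₁ φ) := hφ.partialDeriv (by norm_num) _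
  have hφ₂₂ : ContDiff ℝ 1 (∂₂ (∂₂ φ)) :=
    (hφ.partialDeriv (m := 2) (by norm_num) _).partialDeriv (by norm_num) _
  obtain ⟨M₁, hM₁⟩ := ((hsupp.partialDeriv _).partialDeriv _).exists_bound_of_continuous
    (hφ₁.partialDeriv (m := 0) (by norm_num) (1, 0)).continuous
  obtain ⟨M₂, hM₂⟩ := ((hsupp.partialDeriv _).partialDeriv _).exists_bound_of_continuous
    (hφ₁.partialDeriv (m := 0) (by norm_num) (0, 1)).continuous
  obtain ⟨M₃, hM₃⟩ :=
    (((hsupp.partialDeriv _).partialDeriv _).partialDeriv _).exists_bound_of_continuous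
      (hφ₂₂.partialDeriv (m := 0) (by norm_num) (0, 1)).continuous
  set M := max (max M₁ M₂) M₃
  have hM (p : ℝ × ℝ) : |∂₁ (∂₁ φ) p| ≤ M ∧ |∂₂ (∂₁ φ) p| ≤ M ∧ |∂₂ (∂₂ (∂₂ φ)) p| ≤ M :=
    ⟨(hM₁ p).trans ((le_max_left _ _).trans (le_max_left _ _)),
      (hM₂ p).trans ((le_max_right _ _).trans (le_max_left _ _)), (hM₃ p).trans (le_max_right _ _)⟩
  refine ⟨M, (abs_nonneg _).trans (hM 0).1, fun s u v h hh => ?_⟩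
  rw [itoRemainder_eq_div (hφ.of_le (by norm_num)) s u v hh.ne', abs_div, abs_of_pos hh,
    div_le_iff₀ hh]
  calc _ ≤ M * (|h| ^ 2 + |v - u| * |h| + |v - u| ^ 3) := abs_increment_sub_taylor_le hφ hM s u v h
    _ = M * (h + |v - u| + |v - u| ^ 3 / h) * h := by
      rw [abs_of_pos hh]; field_simp

end PartialDerivatives

section Hyperreal

theorem abs_ofSeq_le_ofSeq {f g : ℕ → ℝ} (h : ∀ᶠ n in hyperfilter ℕ, |f n| ≤ g n) :
    |ofSeq f| ≤ ofSeq g :=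
  abs_le.2 ⟨ofSeq_le_ofSeq.2 (h.mono fun _ hn => neg_le_of_abs_le hn),
    ofSeq_le_ofSeq.2 (h.mono fun _ hn => le_of_abs_le hn)⟩

theorem abs_hyperItoRemainder_le {φ : ℝ × ℝ → ℝ} {C : ℝ}
    (hC : ∀ s u v h : ℝ, 0 < h → |itoRemainder φ s u v h| ≤ C * (h + |v - u| + |v - u| ^ 3 / h))
    (s u v h : ℝ*) (hh : 0 < h) :
    |(hyperExt2 (fun s u => φ (s, u)) (s + h) v - hyperExt2 (fun s u => φ (s, u)) s u) / h -
        (hyperExt2 (fun s u => deriv (fun a => φ (a, u)) s) s u +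
          hyperExt2 (fun s u => deriv (fun b => φ (s, b)) u) s u * ((v - u) / h) +
          h / 2 * hyperExt2 (fun s u => deriv (fun b => deriv (fun c => φ (s, c)) b) u) s u *
            ((v - u) / h) ^ 2)| ≤ C * (h + |v - u| + |v - u| ^ 3 / h) := by
  obtain ⟨s, rfl⟩ := ofSeq_surjective s
  obtain ⟨u, rfl⟩ := ofSeq_surjective u
  obtain ⟨v, rfl⟩ := ofSeq_surjective v
  obtain ⟨h, rfl⟩ := ofSeq_surjective h
  have hh' : ∀ᶠ n in hyperfilter ℕ, 0 < h n := ofSeq_lt_ofSeq.1 hh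
  -- both sides are, definitionally, germs of the corresponding real expressions
  exact abs_ofSeq_le_ofSeq (hh'.mono fun n hn => hC (s n) (u n) (v n) (h n) hn)

theorem abs_le_of_abs_div_inv_le {K : Type*} [Field K] [LinearOrder K] [IsStrictOrderedRing K]
    {N P η k : K} (hN : 0 < N) (hPN : P ≤ N) (hP : P ^ 3 = N ^ 2) (hk : |k / N⁻¹| ≤ η * P) :
    |k| ≤ η ∧ |k| ^ 3 / N⁻¹ ≤ η ^ 3 := by
  rw [div_inv_eq_mul] at hk ⊢
  rw [abs_mul, abs_of_pos hN] at hk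
  have hP₀ : 0 < P := (Odd.pow_pos_iff (by decide)).1 (hP ▸ pow_pos hN 2)
  have hη : 0 ≤ η := nonneg_of_mul_nonneg_left ((by positivity : 0 ≤ |k| * N).trans hk) hP₀
  refine ⟨le_of_mul_le_mul_right (hk.trans (mul_le_mul_of_nonneg_left hPN hη)) hN,
    le_of_mul_le_mul_left ?_ (pow_pos hN 2)⟩
  calc N ^ 2 * (|k| ^ 3 * N) = (|k| * N) ^ 3 := by ring
    _ ≤ (η * P) ^ 3 := by gcongr
    _ = N ^ 2 * η ^ 3 := by rw [mul_pow, hP, mul_comm]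

theorem hyperExt_rpow_two_thirds_omega_le : hyperExt (fun s : ℝ => s ^ ((2 : ℝ) / 3)) ω ≤ ω :=
  ofSeq_le_ofSeq.2 <| ((eventually_ge_atTop 1).filter_mono Nat.hyperfilter_le_atTop).mono
    fun n hn => Real.rpow_le_self_of_one_le (by exact_mod_cast hn) (by norm_num)

theorem hyperExt_rpow_two_thirds_omega_pow_three :
    hyperExt (fun s : ℝ => s ^ ((2 : ℝ) / 3)) ω ^ 3 = ω ^ 2 :=
  congrArg ofSeq <| funext fun n : ℕ => show ((n : ℝ) ^ ((2 : ℝ) / 3)) ^ 3 = (n : ℝ) ^ 2 by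
    rw [← Real.rpow_natCast _ 3, ← Real.rpow_mul n.cast_nonneg, ← Real.rpow_natCast]
    norm_num

theorem infinitesimal_of_abs_le {z w : ℝ*} (h : |z| ≤ w) (hw : Infinitesimal w) :
    Infinitesimal z :=
  infinitesimal_def.2 fun r hr => abs_lt.1 (h.trans_lt (lt_of_pos_of_infinitesimal hw r hr))

theorem infinitesimal_const_mul (c : ℝ) {w : ℝ*} (hw : Infinitesimal w) :
    Infinitesimal (c * w) := by
  have := (isSt_refl_real c).mul hw
  rwa [mul_zero] at this

end Hyperreal

/-- Nonstandard Ito formula: let `φ : ℝ² → ℝ` be `C³` with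
compact support, let `α = ω` be the infinite hypernatural and `eps = ω⁻¹` the
corresponding infinitesimal grid step.  If the grid function `x` satisfies
`|Δx/Δt(t)| ≤ η·α^{2/3}` with `η` infinitesimal, then the grid derivative of
`t ↦ φ(t, x(t))` is infinitesimally close to
`φ_t + φ_x·(Δx/Δt) + (eps/2)·φ_xx·(Δx/Δt)²`. -/
theorem nonstandard_ito_formula (φ : ℝ × ℝ → ℝ)
    (hφ : ContDiff ℝ 3 φ) (hsupp : HasCompactSupport φ)
    (x : ℝ* → ℝ*) (η : ℝ*) (hη : Infinitesimal η)
    (hbound : ∀ t : ℝ*,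
      |(x (t + ω⁻¹) - x t) / ω⁻¹| ≤ η * hyperExt (fun s : ℝ => s ^ ((2 : ℝ) / 3)) ω)
    (t : ℝ*) :
    Infinitesimal
      ((hyperExt2 (fun s u => φ (s, u)) (t + ω⁻¹) (x (t + ω⁻¹)) -
            hyperExt2 (fun s u => φ (s, u)) t (x t)) / ω⁻¹ -
        (hyperExt2 (fun s u => deriv (fun a => φ (a, u)) s) t (x t) +
          hyperExt2 (fun s u => deriv (fun b => φ (s, b)) u) t (x t) *
            ((x (t + ω⁻¹) - x t) / ω⁻¹) +
          ω⁻¹ / 2 *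
            hyperExt2 (fun s u => deriv (fun b => deriv (fun c => φ (s, c)) b) u) t (x t) *
            ((x (t + ω⁻¹) - x t) / ω⁻¹) ^ 2)) := by
  obtain ⟨C, hC₀, hC⟩ := exists_abs_itoRemainder_le hφ hsupp
  obtain ⟨hk, hk₃⟩ := abs_le_of_abs_div_inv_le omega_pos hyperExt_rpow_two_thirds_omega_le
    hyperExt_rpow_two_thirds_omega_pow_three (hbound t)
  have hsmall : Infinitesimal (ω⁻¹ + η + η ^ 3) :=
    ((inv_omega ▸ infinitesimal_epsilon).add hη).add (pow_three η ▸ hη.mul (hη.mul hη))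
  have hC₀' : (0 : ℝ*) ≤ C := by exact_mod_cast hC₀
  have hR := abs_hyperItoRemainder_le hC t (x t) (x (t + ω⁻¹)) ω⁻¹ (inv_pos.2 omega_pos)
  exact infinitesimal_of_abs_le (hR.trans (by gcongr)) (infinitesimal_const_mul C hsmall)
end

section
/- Continuous dependence on initial data for grid ODEs with Lipschitz right-hand side: if f satisfies |f(t,x) - f(t,y)| ≤ L|x - y| for all t, x, y (L a real constant), and x(·, x₀), x(·, x₁) are the grid solutions of Δx/Δt = f(t, x) with initial data x₀, x₁ at time 0, then for all grid times t = kε with 0 ≤ kε ≤ T one has |x(t, x₀) - x(t, x₁)| ≤ |x₀ - x₁|·(1 + εL)^k ≤ |x₀ - x₁|·e^{LT}. Consequently if x₀ ~ x₁ with x₀, x₁ bounded and ε infinitesimal, then x(t, x₀) ~ x(t, x₁). -/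
/-!
Each Euler step `a ↦ a + ε f(t, a)` is Lipschitz with constant `1 + εL`, so the distance between
two grid solutions grows at most geometrically. On `[0, T]` we have `k ε ≤ T`, whence
`(1 + εL)^k ≤ (1 + LT/k)^k ≤ e^{LT}`: the initial distance is multiplied by at most a standard
constant, and a standard multiple of an infinitesimal is infinitesimal.
-/

open Hyperreal

section EulerStep

variable {K : Type*} [Field K] [LinearOrder K] [IsStrictOrderedRing K]

theorem nonneg_of_abs_sub_le_mul_abs_sub {g : K → K} {L : K}
    (hg : ∀ a b, |g a - g b| ≤ L * |a - b|) : 0 ≤ L := by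
  simpa using (abs_nonneg _).trans (hg 1 0)

theorem abs_euler_step_sub_le {δ L a b ga gb : K} (hδ : 0 ≤ δ) (hg : |ga - gb| ≤ L * |a - b|) :
    |(a + δ * ga) - (b + δ * gb)| ≤ (1 + δ * L) * |a - b| :=
  calc |(a + δ * ga) - (b + δ * gb)| = |(a - b) + δ * (ga - gb)| := by ring_nf
    _ ≤ |a - b| + δ * |ga - gb| := by
        rw [← abs_of_nonneg hδ, ← abs_mul, abs_of_nonneg hδ]; exact abs_add_le _ _
    _ ≤ |a - b| + δ * (L * |a - b|) := by gcongr
    _ = (1 + δ * L) * |a - b| := by ring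

theorem abs_sub_le_of_euler {δ L : K} {g : ℕ → K → K} {x y : ℕ → K} (hδ : 0 ≤ δ) (hL : 0 ≤ L)
    (hg : ∀ k a b, |g k a - g k b| ≤ L * |a - b|)
    (hx : ∀ k, x (k + 1) = x k + δ * g k (x k)) (hy : ∀ k, y (k + 1) = y k + δ * g k (y k))
    (k : ℕ) : |x k - y k| ≤ |x 0 - y 0| * (1 + δ * L) ^ k := by
  induction k with
  | zero => simp
  | succ k ih =>
    calc |x (k + 1) - y (k + 1)| ≤ (1 + δ * L) * |x k - y k| := by
          rw [hx, hy]; exact abs_euler_step_sub_le hδ (hg k _ _)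
      _ ≤ (1 + δ * L) * (|x 0 - y 0| * (1 + δ * L) ^ k) := by gcongr
      _ = |x 0 - y 0| * (1 + δ * L) ^ (k + 1) := by ring

end EulerStep

theorem Real.one_add_div_pow_le_exp {c : ℝ} (hc : 0 ≤ c) (n : ℕ) : (1 + c / n) ^ n ≤ exp c := by
  simpa [sub_eq_add_neg, neg_div] using
    one_sub_div_pow_le_exp_neg (n := n) (t := -c) (by linarith [n.cast_nonneg (α := ℝ)])

namespace Hyperreal

theorem one_add_pow_le_exp_of_nat_mul_le {δ : ℝ*} {c : ℝ} {k : ℕ} (hδ : 0 ≤ δ)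
    (hk : (k : ℝ*) * δ ≤ c) : (1 + δ) ^ k ≤ (Real.exp c : ℝ*) := by
  have hc : 0 ≤ c := by exact_mod_cast (mul_nonneg k.cast_nonneg hδ).trans hk
  rcases k.eq_zero_or_pos with rfl | hk0
  · simpa using coe_le_coe.mpr (Real.one_le_exp hc)
  have hkH : (0 : ℝ*) < k := by exact_mod_cast hk0
  have hδc : δ ≤ ((c / k : ℝ) : ℝ*) := by
    rw [show ((c / k : ℝ) : ℝ*) = c / k by norm_cast, le_div_iff₀ hkH, mul_comm]; exact hk
  calc (1 + δ) ^ k ≤ (1 + ((c / k : ℝ) : ℝ*)) ^ k := by gcongr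
    _ = (((1 + c / k) ^ k : ℝ) : ℝ*) := by norm_cast
    _ ≤ (Real.exp c : ℝ*) := by exact_mod_cast Real.one_add_div_pow_le_exp hc k

theorem Infinitesimal.of_abs_le_abs_mul {d z : ℝ*} (hd : Infinitesimal d) (C : ℝ)
    (h : |z| ≤ |d| * C) : Infinitesimal z := by
  have hdC : IsSt (d * C) 0 := by simpa using IsSt.mul hd (isSt_refl_real C)
  refine abs_lt_real_iff_infinitesimal.mpr fun r hr => ?_
  calc |z| ≤ |d| * C := h
    _ ≤ |d * C| := by rw [abs_mul]; gcongr; exact le_abs_self _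
    _ < |(r : ℝ*)| := abs_lt_real_iff_infinitesimal.mp hdC r hr

end Hyperreal

theorem grid_ode_continuous_dependence_general (eps : ℝ*) (heps : 0 < eps)
    (L T : ℝ)
    (f : ℝ* → ℝ* → ℝ*) (hf : ∀ t a b : ℝ*, |f t a - f t b| ≤ L * |a - b|)
    (x y : ℕ → ℝ*)
    (hx : ∀ k : ℕ, x (k + 1) = x k + eps * f (k * eps) (x k))
    (hy : ∀ k : ℕ, y (k + 1) = y k + eps * f (k * eps) (y k)) :
    (∀ k : ℕ, (k : ℝ*) * eps ≤ T →
        |x k - y k| ≤ |x 0 - y 0| * (1 + eps * L) ^ k ∧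
          |x 0 - y 0| * (1 + eps * L) ^ k ≤ |x 0 - y 0| * (Real.exp (L * T) : ℝ)) ∧
      (Infinitesimal eps → Infinitesimal (x 0 - y 0) →
        (∃ r : ℝ, |x 0| < r) → (∃ r : ℝ, |y 0| < r) →
        ∀ k : ℕ, (k : ℝ*) * eps ≤ T → Infinitesimal (x k - y k)) := by
  have hL : (0 : ℝ*) ≤ L := nonneg_of_abs_sub_le_mul_abs_sub (hf 0)
  have hgrowth := abs_sub_le_of_euler heps.le hL (fun k => hf (k * eps)) hx hy
  have hexp : ∀ k : ℕ, (k : ℝ*) * eps ≤ T →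
      |x 0 - y 0| * (1 + eps * L) ^ k ≤ |x 0 - y 0| * (Real.exp (L * T) : ℝ) := by
    intro k hk
    refine mul_le_mul_of_nonneg_left (one_add_pow_le_exp_of_nat_mul_le
      (mul_nonneg heps.le hL) ?_) (abs_nonneg _)
    rw [coe_mul, ← mul_assoc, mul_comm _ (L : ℝ*)]
    exact mul_le_mul_of_nonneg_left hk hL
  refine ⟨fun k hk => ⟨hgrowth k, hexp k hk⟩, fun _ hd _ _ k hk => ?_⟩
  exact hd.of_abs_le_abs_mul _ ((hgrowth k).trans (hexp k hk))

/-- continuous dependence on the initial data for grid ODEs with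
a Lipschitz right-hand side.  `x` and `y` are the grid solutions (indexed by
the step number `k`, at grid time `k·eps`) with initial data `x 0` and `y 0`.
The error grows at most like `(1 + eps·L)^k ≤ e^{L·T}` on `[0, T]`; hence
infinitesimally close bounded initial data yield infinitesimally close
solutions when the step is infinitesimal. -/
theorem grid_ode_continuous_dependence (eps : ℝ*) (heps : 0 < eps)
    (L T : ℝ) (hL : 0 < L) (hT : 0 < T)
    (f : ℝ* → ℝ* → ℝ*) (hf : ∀ t a b : ℝ*, |f t a - f t b| ≤ L * |a - b|)
    (x y : ℕ → ℝ*)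
    (hx : ∀ k : ℕ, x (k + 1) = x k + eps * f (k * eps) (x k))
    (hy : ∀ k : ℕ, y (k + 1) = y k + eps * f (k * eps) (y k)) :
    (∀ k : ℕ, (k : ℝ*) * eps ≤ T →
        |x k - y k| ≤ |x 0 - y 0| * (1 + eps * L) ^ k ∧
          |x 0 - y 0| * (1 + eps * L) ^ k ≤ |x 0 - y 0| * (Real.exp (L * T) : ℝ)) ∧
      (Infinitesimal eps → Infinitesimal (x 0 - y 0) →
        (∃ r : ℝ, |x 0| < r) → (∃ r : ℝ, |y 0| < r) →
        ∀ k : ℕ, (k : ℝ*) * eps ≤ T → Infinitesimal (x k - y k)) :=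
  grid_ode_continuous_dependence_general eps heps L T f hf x y hx hy
end
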